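/- arXiv:math/0601624 — 2 statements merged into one kernel-verified Lean document; each statement's English description precedes it below -/
import Mathlib

section
/- For x≥0, y≥1, l≥0, j≥0, the number of nonnegative Bernoulli paths of length l from x to y with exactly j peaks, starting with an up step and ending with a down step, equals G(l,j-1,j-1,x,y) - G(l,j-2,j,-x,y), where G(l,j1,j2,x,y)=binomial((l+y-x)/2-1, j1)·binomial((l-y+x)/2-1, j2). -/
/-- The value at time `i` of the Bernoulli path with `n` steps encoded by
`f : Fin n → Bool` (`true` = step `+1`, `false` = step `-1`), started at `0`. -/
def pathVal {n : ℕ} (f : Fin n → Bool) (i : ℕ) : ℤ :=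
  ∑ j ∈ Finset.range i, (if h : j < n then (if f ⟨j, h⟩ then (1 : ℤ) else -1) else 0)

/-- `x` is a peak: `1 ≤ x ≤ n-1` and `S(x-1) = S(x+1) = S(x) - 1`. -/
def IsPeak {n : ℕ} (f : Fin n → Bool) (x : ℕ) : Prop :=
  0 < x ∧ x < n ∧ pathVal f x = pathVal f (x - 1) + 1 ∧
    pathVal f (x + 1) = pathVal f x - 1

instance {n : ℕ} (f : Fin n → Bool) (x : ℕ) : Decidable (IsPeak f x) := by
  unfold IsPeak; infer_instance

/-- Number of peaks of the path encoded by `f`. -/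
def numPeaks {n : ℕ} (f : Fin n → Bool) : ℕ :=
  ((Finset.range n).filter (fun x => IsPeak f x)).card

/-- Integer binomial coefficient with the convention that it vanishes unless
`0 ≤ p ≤ m`. -/
def ichoose (m p : ℤ) : ℤ :=
  if 0 ≤ m ∧ 0 ≤ p then ((m.toNat).choose p.toNat : ℤ) else 0

/-- `hchoose num p = binomial (num/2 - 1) p`, with the convention that it
vanishes when `num` is odd (non-integer upper argument) or when the arguments
are out of range. -/
def hchoose (num p : ℤ) : ℤ :=
  if 2 ∣ num then ichoose (num / 2 - 1) p else 0

/-- `G(l,j₁,j₂,x,y) = binomial((l+y-x)/2 - 1, j₁) · binomial((l-y+x)/2 - 1, j₂)`. -/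
def G (l j1 j2 x y : ℤ) : ℤ := hchoose (l + y - x) j1 * hchoose (l - y + x) j2

/-- The path started at `x` stays nonnegative on `[0, n]`. -/
def IsNonnegFrom {n : ℕ} (x : ℤ) (f : Fin n → Bool) : Prop :=
  ∀ i ∈ Finset.range (n + 1), 0 ≤ x + pathVal f i

instance {n : ℕ} (x : ℤ) (f : Fin n → Bool) : Decidable (IsNonnegFrom x f) := by
  unfold IsNonnegFrom; infer_instance

/-!
Removing the last step of a path of length `l + 1 ≥ 2` whose first step is up leaves such a
path of length `l`, and a peak is lost exactly when an up step is followed by the removed down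
step. So the numbers `U`, `D` of such paths ending with an up, resp. down, step satisfy
`U(l+1, j, y) = U(l, j, y-1) + D(l, j, y-1)` and, for `y ≥ 0`,
`D(l+1, j, y) = U(l, j-1, y+1) + D(l, j, y+1)`.
The closed forms `G(l,j,j-1,x,y) - G(l,j-1,j,-x,y)` (plus the all-up path) for `U` and
`G(l,j-1,j-1,x,y) - G(l,j-2,j,-x,y)` for `D` obey the same recurrences by Pascal's rule in one
binomial factor of `G`, and agree with the counts for `l = 1`.
-/

open Finset

def stepVal (b : Bool) : ℤ := if b then 1 else -1

lemma stepVal_injective : Function.Injective stepVal := by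
  intro a b; cases a <;> cases b <;> simp [stepVal]

section Path

variable {l : ℕ}

lemma pathVal_zero (f : Fin l → Bool) : pathVal f 0 = 0 := rfl

lemma pathVal_succ (f : Fin l → Bool) {i : ℕ} (hi : i < l) :
    pathVal f (i + 1) = pathVal f i + stepVal (f ⟨i, hi⟩) := by
  rw [pathVal, sum_range_succ, dif_pos hi]; rfl

lemma exists_pathVal_sub_pred_eq_stepVal (f : Fin l → Bool) (hl : 0 < l) :
    ∃ b, pathVal f l - pathVal f (l - 1) = stepVal b := by
  obtain ⟨m, rfl⟩ : ∃ m, l = m + 1 := ⟨l - 1, by omega⟩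
  exact ⟨_, by rw [pathVal_succ f m.lt_succ_self, Nat.add_sub_cancel]; ring⟩

lemma pathVal_snoc_of_le (g : Fin l → Bool) (c : Bool) {i : ℕ} (hi : i ≤ l) :
    pathVal (Fin.snoc g c : Fin (l + 1) → Bool) i = pathVal g i := by
  induction i with
  | zero => rfl
  | succ i ih =>
    rw [pathVal_succ _ (by omega), pathVal_succ g hi, ih (by omega)]
    exact congrArg (pathVal g i + stepVal ·)
      (Fin.snoc_castSucc (α := fun _ => Bool) c g ⟨i, hi⟩)

lemma pathVal_snoc_last (g : Fin l → Bool) (c : Bool) :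
    pathVal (Fin.snoc g c : Fin (l + 1) → Bool) (l + 1) = pathVal g l + stepVal c := by
  rw [pathVal_succ _ l.lt_succ_self, pathVal_snoc_of_le g c le_rfl]
  exact congrArg (pathVal g l + stepVal ·) (Fin.snoc_last (α := fun _ => Bool) c g)

lemma IsNonnegFrom.nonneg_pathVal {x : ℤ} {f : Fin l → Bool} (hf : IsNonnegFrom x f) {i : ℕ}
    (hi : i ≤ l) : 0 ≤ x + pathVal f i :=
  hf i (mem_range.2 (Nat.lt_succ_of_le hi))

lemma isNonnegFrom_snoc (x : ℤ) (g : Fin l → Bool) (c : Bool) :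
    IsNonnegFrom x (Fin.snoc g c : Fin (l + 1) → Bool) ↔
      IsNonnegFrom x g ∧ 0 ≤ x + pathVal g l + stepVal c := by
  simp only [IsNonnegFrom, mem_range, Nat.lt_succ_iff]
  rw [add_assoc, ← pathVal_snoc_last g c]
  constructor
  · intro h
    refine ⟨fun i hi => ?_, h _ le_rfl⟩
    rw [← pathVal_snoc_of_le g c hi]; exact h i (by omega)
  · rintro ⟨hg, hlast⟩ i hi
    rcases Nat.lt_or_ge i (l + 1) with hi' | hi'
    · rw [pathVal_snoc_of_le g c (by omega)]; exact hg i (by omega)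
    · rwa [show i = l + 1 by omega]

lemma isPeak_snoc_of_lt (g : Fin l → Bool) (c : Bool) {i : ℕ} (hi : i < l) :
    IsPeak (Fin.snoc g c : Fin (l + 1) → Bool) i ↔ IsPeak g i := by
  simp only [IsPeak, pathVal_snoc_of_le g c (show i ≤ l by omega),
    pathVal_snoc_of_le g c (show i - 1 ≤ l by omega),
    pathVal_snoc_of_le g c (show i + 1 ≤ l by omega)]
  omega

lemma isPeak_snoc_self (g : Fin l → Bool) (c : Bool) :
    IsPeak (Fin.snoc g c : Fin (l + 1) → Bool) l ↔
      0 < l ∧ pathVal g l - pathVal g (l - 1) = 1 ∧ c = false := by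
  simp only [IsPeak, pathVal_snoc_last, pathVal_snoc_of_le g c le_rfl,
    pathVal_snoc_of_le g c (Nat.sub_le l 1)]
  cases c <;> simp [stepVal] <;> omega

lemma numPeaks_snoc (g : Fin l → Bool) (c : Bool) :
    numPeaks (Fin.snoc g c : Fin (l + 1) → Bool) = numPeaks g +
      if 0 < l ∧ pathVal g l - pathVal g (l - 1) = 1 ∧ c = false then 1 else 0 := by
  have hlow : (range l).filter (IsPeak (Fin.snoc g c : Fin (l + 1) → Bool)) =
      (range l).filter (IsPeak g) :=
    filter_congr fun i hi => isPeak_snoc_of_lt g c (mem_range.1 hi)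
  rw [numPeaks, range_add_one, filter_insert, hlow]
  by_cases h : IsPeak (Fin.snoc g c : Fin (l + 1) → Bool) l
  · rw [if_pos h, if_pos ((isPeak_snoc_self g c).1 h), card_insert_of_notMem (by simp)]; rfl
  · rw [if_neg h, if_neg (mt (isPeak_snoc_self g c).2 h)]; rfl

lemma numPeaks_of_le_one (hl : l ≤ 1) (f : Fin l → Bool) : numPeaks f = 0 :=
  card_eq_zero.2 <| filter_eq_empty_iff.2 fun i hi h => by
    have := mem_range.1 hi; have := h.1; omega

end Path

-- The peak count `j` is an integer so that the recurrences may shift it by `-1`.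
def upStartPaths (l : ℕ) (j x y : ℤ) (c : Bool) : Finset (Fin l → Bool) :=
  univ.filter fun f => x + pathVal f l = y ∧ IsNonnegFrom x f ∧ pathVal f 1 = 1 ∧
    pathVal f l - pathVal f (l - 1) = stepVal c ∧ (numPeaks f : ℤ) = j

section UpStartPaths

variable {l : ℕ} {j x y : ℤ}

lemma upStartPaths_zero (c : Bool) : upStartPaths 0 j x y c = ∅ := by
  refine filter_eq_empty_iff.2 fun f _ h => ?_
  simp [pathVal] at h

lemma upStartPaths_eq_empty_of_neg (hy : y < 0) (c : Bool) : upStartPaths l j x y c = ∅ := by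
  refine filter_eq_empty_iff.2 fun f _ ⟨hend, hnonneg, _⟩ => ?_
  have := hnonneg.nonneg_pathVal le_rfl
  omega

lemma disjoint_upStartPaths (j' y' : ℤ) :
    Disjoint (upStartPaths l j x y true) (upStartPaths l j' x y' false) :=
  disjoint_filter.2 fun _ _ h h' => by
    have := h.2.2.2.1.symm.trans h'.2.2.2.1
    simp [stepVal] at this

lemma last_eq_of_mem_upStartPaths {f : Fin (l + 1) → Bool} {c : Bool}
    (hf : f ∈ upStartPaths (l + 1) j x y c) : f (Fin.last l) = c := by
  have hlast := (mem_filter.1 hf).2.2.2.2.1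
  rw [Nat.add_sub_cancel, pathVal_succ f l.lt_succ_self, add_sub_cancel_left] at hlast
  exact stepVal_injective hlast

lemma snoc_mem_upStartPaths_iff (hl : 0 < l) (hy : 0 ≤ y) (g : Fin l → Bool) (c : Bool) :
    (Fin.snoc g c : Fin (l + 1) → Bool) ∈ upStartPaths (l + 1) j x y c ↔
      g ∈ upStartPaths l (j - if c then 0 else 1) x (y - stepVal c) true ∪
        upStartPaths l j x (y - stepVal c) false := by
  simp only [upStartPaths, mem_union, mem_filter, mem_univ, true_and, pathVal_snoc_last,
    Nat.add_sub_cancel, pathVal_snoc_of_le g c le_rfl, pathVal_snoc_of_le g c hl,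
    isNonnegFrom_snoc, numPeaks_snoc]
  obtain ⟨b, hb⟩ := exists_pathVal_sub_pred_eq_stepVal g hl
  rw [hb]
  by_cases hg : IsNonnegFrom x g
  · have := hg.nonneg_pathVal le_rfl
    cases b <;> cases c <;> simp [stepVal, hl, hg] <;> omega
  · simp [hg]

lemma snoc_init_of_mem_upStartPaths {f : Fin (l + 1) → Bool} {c : Bool}
    (hf : f ∈ upStartPaths (l + 1) j x y c) : Fin.snoc (Fin.init f) c = f := by
  rw [← last_eq_of_mem_upStartPaths hf, Fin.snoc_init_self]

lemma card_upStartPaths_succ (hl : 0 < l) (hy : 0 ≤ y) (c : Bool) :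
    #(upStartPaths (l + 1) j x y c) =
      #(upStartPaths l (j - if c then 0 else 1) x (y - stepVal c) true) +
        #(upStartPaths l j x (y - stepVal c) false) := by
  rw [← card_union_of_disjoint (disjoint_upStartPaths _ _)]
  refine card_nbij' Fin.init (fun g => Fin.snoc g c) (fun f hf => ?_)
    (fun g hg => (snoc_mem_upStartPaths_iff hl hy g c).2 hg)
    (fun f hf => snoc_init_of_mem_upStartPaths hf)
    (fun g _ => Fin.init_snoc (α := fun _ => Bool) c g)
  rw [mem_coe, ← snoc_mem_upStartPaths_iff hl hy, snoc_init_of_mem_upStartPaths hf]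
  exact hf

lemma mem_upStartPaths_one_iff (hx : 0 ≤ x) (f : Fin 1 → Bool) (c : Bool) :
    f ∈ upStartPaths 1 j x y c ↔ (c = true ∧ j = 0 ∧ y = x + 1) ∧ f = fun _ => true := by
  have hf : f = (fun _ => true) ↔ f 0 = true := by simp [funext_iff, Fin.forall_fin_one]
  have h1 : pathVal f 1 = stepVal (f 0) := by
    simpa [pathVal_zero] using pathVal_succ f zero_lt_one
  simp only [upStartPaths, mem_filter, mem_univ, true_and, IsNonnegFrom, numPeaks_of_le_one le_rfl,
    hf, range_add_one, forall_mem_insert, h1, Nat.sub_self, pathVal_zero]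
  cases f 0 <;> cases c <;> simp [stepVal, hx]
  omega

lemma card_upStartPaths_one (hx : 0 ≤ x) (c : Bool) :
    #(upStartPaths 1 j x y c) = if c = true ∧ j = 0 ∧ y = x + 1 then 1 else 0 := by
  split_ifs with h
  · exact card_eq_one.2 ⟨fun _ => true, by ext f; simp [mem_upStartPaths_one_iff hx, h]⟩
  · exact card_eq_zero.2 (eq_empty_of_forall_notMem fun f hf =>
      h ((mem_upStartPaths_one_iff hx f c).1 hf).1)

end UpStartPaths

lemma ichoose_add_one (m p : ℤ) :
    ichoose (m + 1) p = ichoose m p + ichoose m (p - 1) + if m = -1 ∧ p = 0 then 1 else 0 := by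
  rcases lt_trichotomy m (-1) with hm | rfl | hm
  · simp [ichoose, show ¬ 0 ≤ m + 1 by omega, show ¬ 0 ≤ m by omega, hm.ne]
  · rcases lt_trichotomy p 0 with hp | rfl | hp
    · simp [ichoose, hp.not_ge, hp.ne]
    · simp [ichoose]
    · simp [ichoose, hp.le, hp.ne', Nat.choose_eq_zero_iff, hp]
  · obtain ⟨n, rfl⟩ : ∃ n : ℕ, m = n := ⟨m.toNat, by omega⟩
    rcases lt_trichotomy p 0 with hp | rfl | hp
    · simp [ichoose, hp.not_ge, show ¬ 1 ≤ p by omega]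
    · simp [ichoose]
      omega
    · obtain ⟨q, rfl⟩ : ∃ q : ℕ, p = q + 1 := ⟨p.toNat - 1, by omega⟩
      simp [ichoose, Nat.choose_succ_succ, show (0 : ℤ) ≤ n + 1 by omega,
        show (0 : ℤ) ≤ q + 1 by omega, add_comm]

lemma hchoose_of_neg_right (n : ℤ) {p : ℤ} (hp : p < 0) : hchoose n p = 0 := by
  simp [hchoose, ichoose, hp.not_ge]

lemma hchoose_of_le_one {n : ℤ} (hn : n ≤ 1) (p : ℤ) : hchoose n p = 0 := by
  unfold hchoose ichoose
  split_ifs <;> omega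

lemma hchoose_two_mul_zero {m : ℤ} (hm : 1 ≤ m) : hchoose (2 * m) 0 = 1 := by
  simp [hchoose, ichoose, hm]

lemma hchoose_add_two (n p : ℤ) :
    hchoose (n + 2) p = hchoose n p + hchoose n (p - 1) + if n = 0 ∧ p = 0 then 1 else 0 := by
  by_cases h : 2 ∣ n
  · rw [hchoose, hchoose, hchoose, if_pos (dvd_add h dvd_rfl), if_pos h, if_pos h,
      show (n + 2) / 2 - 1 = n / 2 - 1 + 1 by omega, ichoose_add_one]
    simp only [show n / 2 - 1 = -1 ∧ p = 0 ↔ n = 0 ∧ p = 0 by omega]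
  · simp [hchoose, h, show ¬ 2 ∣ n + 2 by omega]
    omega

lemma G_of_le_one {l : ℤ} (hl : l ≤ 1) (j₁ j₂ x y : ℤ) : G l j₁ j₂ x y = 0 := by
  rcases le_or_gt (l + y - x) 1 with h | h
  · rw [G, hchoose_of_le_one h, zero_mul]
  · rw [G, hchoose_of_le_one (show l - y + x ≤ 1 by omega), mul_zero]

lemma G_succ_left (l j₁ j₂ x y : ℤ) :
    G (l + 1) j₁ j₂ x y = G l j₁ j₂ x (y - 1) + G l (j₁ - 1) j₂ x (y - 1) +
      if l + (y - 1) - x = 0 ∧ j₁ = 0 then hchoose (l - (y - 1) + x) j₂ else 0 := by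
  rw [G, G, G, show l + 1 + y - x = l + (y - 1) - x + 2 by ring,
    show l + 1 - y + x = l - (y - 1) + x by ring, hchoose_add_two]
  split_ifs <;> ring

lemma G_succ_right (l j₁ j₂ x y : ℤ) :
    G (l + 1) j₁ j₂ x y = G l j₁ j₂ x (y + 1) + G l j₁ (j₂ - 1) x (y + 1) +
      if l - (y + 1) + x = 0 ∧ j₂ = 0 then hchoose (l + (y + 1) - x) j₁ else 0 := by
  rw [G, G, G, show l + 1 - y + x = l - (y + 1) + x + 2 by ring,
    show l + 1 + y - x = l + (y + 1) - x by ring, hchoose_add_two]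
  split_ifs <;> ring

/-- The indicator counts the all-up path, which `G` misses because of the convention
`binomial (-1) (-1) = 0`. -/
def upUpFormula (l j x y : ℤ) : ℤ :=
  G l j (j - 1) x y - G l (j - 1) j (-x) y + if j = 0 ∧ y = x + l then 1 else 0

def upDownFormula (l j x y : ℤ) : ℤ :=
  G l (j - 1) (j - 1) x y - G l (j - 2) j (-x) y

section Formulas

variable {l j x y : ℤ}

lemma upUpFormula_one : upUpFormula 1 j x y = if j = 0 ∧ y = x + 1 then 1 else 0 := by
  simp [upUpFormula, G_of_le_one le_rfl]

lemma upDownFormula_of_le_one (hl : l ≤ 1) : upDownFormula l j x y = 0 := by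
  simp [upDownFormula, G_of_le_one hl]

lemma upUpFormula_zero_right (h : 0 < x + l) : upUpFormula l j x 0 = 0 := by
  rw [upUpFormula, if_neg (by omega), G, G]
  ring_nf

lemma upUpFormula_succ (hl : 1 ≤ l) (hx : 0 ≤ x) (hy : 1 ≤ y) :
    upUpFormula (l + 1) j x y = upUpFormula l j x (y - 1) + upDownFormula l j x (y - 1) := by
  rw [upUpFormula, upUpFormula, upDownFormula, G_succ_left, G_succ_left,
    if_neg (show ¬ (l + (y - 1) - -x = 0 ∧ j - 1 = 0) by omega), show j - 1 - 1 = j - 2 by ring]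
  simp only [show y = x + (l + 1) ↔ y - 1 = x + l by omega]
  by_cases hj : j = 0
  · simp only [hj, true_and, hchoose_of_neg_right _ (show (0 : ℤ) - 1 < 0 by norm_num), ite_self]
    ring
  · simp only [hj, and_false, false_and, if_false]
    ring

lemma upDownFormula_succ (hl : 1 ≤ l) :
    upDownFormula (l + 1) j x y =
      upUpFormula l (j - 1) x (y + 1) + upDownFormula l j x (y + 1) := by
  rw [upDownFormula, upUpFormula, upDownFormula, G_succ_right, G_succ_right,
    show j - 1 - 1 = j - 2 by ring]
  have hvanish :
      (if l - (y + 1) + -x = 0 ∧ j = 0 then hchoose (l + (y + 1) - -x) (j - 2) else 0) = 0 := by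
    split_ifs with h
    · exact hchoose_of_neg_right _ (by omega)
    · rfl
  have hpeak :
      (if l - (y + 1) + x = 0 ∧ j - 1 = 0 then hchoose (l + (y + 1) - x) (j - 1) else 0) =
      if j - 1 = 0 ∧ y + 1 = x + l then 1 else 0 := by
    split_ifs with h h' h'
    · rw [h.2, show l + (y + 1) - x = 2 * l by omega, hchoose_two_mul_zero hl]
    · omega
    · omega
    · rfl
  rw [hvanish, hpeak]
  ring

end Formulas

theorem card_upStartPaths_eq_formula {l : ℕ} (hl : 1 ≤ l) {x : ℤ} (hx : 0 ≤ x) :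
    ∀ j y : ℤ, 0 ≤ y →
      (#(upStartPaths l j x y true) : ℤ) = upUpFormula l j x y ∧
        (#(upStartPaths l j x y false) : ℤ) = upDownFormula l j x y := by
  induction l, hl using Nat.le_induction with
  | base =>
    intro j y _
    simp [card_upStartPaths_one hx, upUpFormula_one, upDownFormula_of_le_one]
  | succ l hl ih =>
    intro j y hy
    push_cast
    refine ⟨?_, ?_⟩
    · rcases hy.eq_or_lt with rfl | hy
      · rw [card_upStartPaths_succ hl le_rfl, upStartPaths_eq_empty_of_neg (by simp [stepVal]),
          upStartPaths_eq_empty_of_neg (by simp [stepVal]), upUpFormula_zero_right (by omega)]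
        simp
      · rw [card_upStartPaths_succ hl hy.le]
        simp only [if_true, sub_zero, stepVal]
        push_cast
        rw [(ih j (y - 1) (by omega)).1, (ih j (y - 1) (by omega)).2,
          upUpFormula_succ (by omega) hx hy]
    · rw [card_upStartPaths_succ hl hy]
      simp only [Bool.false_eq_true, if_false, stepVal, sub_neg_eq_add]
      push_cast
      rw [(ih (j - 1) (y + 1) (by omega)).1, (ih j (y + 1) (by omega)).2,
        upDownFormula_succ (by omega)]

/-- For `x ≥ 0`, `y ≥ 1`, the number of nonnegative Bernoulli paths of length
`l` from `x` to `y` with exactly `j` peaks, starting with an up step and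
ending with a down step, equals `G(l,j-1,j-1,x,y) - G(l,j-2,j,-x,y)`. -/
theorem card_nonneg_paths_ud (l j : ℕ) (x y : ℤ) (hx : 0 ≤ x) (hy : 1 ≤ y) :
    (((Finset.univ : Finset (Fin l → Bool)).filter
        (fun f => x + pathVal f l = y ∧ IsNonnegFrom x f ∧
          pathVal f 1 = 1 ∧ pathVal f l - pathVal f (l - 1) = -1 ∧
          numPeaks f = j)).card : ℤ)
      = G l ((j : ℤ) - 1) ((j : ℤ) - 1) x y - G l ((j : ℤ) - 2) j (-x) y := by
  have hpaths : (Finset.univ : Finset (Fin l → Bool)).filter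
      (fun f => x + pathVal f l = y ∧ IsNonnegFrom x f ∧ pathVal f 1 = 1 ∧
        pathVal f l - pathVal f (l - 1) = -1 ∧ numPeaks f = j) = upStartPaths l j x y false := by
    simp [upStartPaths, stepVal]
  rw [hpaths]
  rcases Nat.eq_zero_or_pos l with rfl | hl
  · simp [upStartPaths_zero, G_of_le_one]
  · exact (card_upStartPaths_eq_formula hl hx j y (by omega)).2
end

section
/- The map Φ_n sending a Bernoulli path S of length n to the simple chain H of length n+1 defined by ΔH_i = 1 if ΔS_i ≠ ΔS_{i-1} and ΔH_i = 0 otherwise (with conventions ΔS_0 = -1 and ΔS_{n+1} = +1), restricted to paths with exactly k peaks, is a bijection onto the set of nondecreasing 0/1-increment chains H of length n+1 with H_0 = 0 and H_{n+1} = 2k+1. -/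
/-- The extended step sequence of the path encoded by `f`: `ΔS_i` for
`1 ≤ i ≤ n` is the `i`-th step, with the conventions `ΔS_0 = -1` (`false`)
and `ΔS_i = +1` (`true`) for `i ≥ n + 1`. -/
def stepExt {n : ℕ} (f : Fin n → Bool) (i : ℕ) : Bool :=
  if h : 1 ≤ i ∧ i ≤ n then f ⟨i - 1, by omega⟩ else decide (n + 1 ≤ i)

/-- The map `Φₙ` from Bernoulli paths with `n` steps to simple chains with
`n+1` steps (encoded by their 0/1 increments): `ΔH_i = 1` iff
`ΔS_i ≠ ΔS_{i-1}`, with `ΔS_0 = -1`, `ΔS_{n+1} = +1`. -/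
def Phi {n : ℕ} (f : Fin n → Bool) : Fin (n + 1) → Bool :=
  fun i => stepExt f ((i : ℕ) + 1) != stepExt f (i : ℕ)

/-- The value `H_j` of the simple chain encoded by the 0/1 increments `g`. -/
def chainVal {n : ℕ} (g : Fin (n + 1) → Bool) (j : ℕ) : ℕ :=
  ∑ i ∈ Finset.range j, (if h : i < n + 1 then (if g ⟨i, h⟩ then 1 else 0) else 0)

/-!
Read the path through its extended step sequence `s = stepExt f`, which starts with `s 0 = false`
and ends with `s (n + 1) = true`. The chain `Φ f` climbs exactly where `s` changes value, so
`H_j` is the number of changes of `s` before `j`. Since `s` starts low, those changes alternate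
up, down, up, …; hence `H_j ≡ s j (mod 2)`, which recovers `f` from `H` and inverts `Φ` on
chains of odd height, and the total number of changes is `2 · #(down-changes) + 1`, where the
down-changes are exactly the peaks.
-/

open Finset

lemma sum_range_bne_toNat_eq (s : ℕ → Bool) (h0 : s 0 = false) (m : ℕ) :
    ∑ x ∈ range m, (s (x + 1) != s x).toNat =
      2 * ∑ x ∈ range m, (s x && !s (x + 1)).toNat + (s m).toNat := by
  induction m with
  | zero => simp [h0]
  | succ m ih =>
    rw [sum_range_succ, sum_range_succ, ih]
    cases s m <;> cases s (m + 1) <;> simp; ring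

section Path

variable {n : ℕ} (f : Fin n → Bool)

@[simp]
lemma stepExt_zero : stepExt f 0 = false := by
  simp [stepExt]

lemma stepExt_of_lt {i : ℕ} (h : n < i) : stepExt f i = true := by
  simp [stepExt, h, Nat.succ_le_of_lt h]

lemma stepExt_succ (i : Fin n) : stepExt f (i + 1) = f i := by
  simp [stepExt, Nat.succ_le_of_lt i.isLt]

lemma pathVal_succ_s14 (i : Fin n) :
    pathVal f (i + 1) = pathVal f i + if f i then 1 else -1 := by
  simp [pathVal, sum_range_succ]

lemma isPeak_iff_stepExt (x : ℕ) :
    IsPeak f x ↔ stepExt f x = true ∧ stepExt f (x + 1) = false := by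
  rcases x with _ | y
  · simp [IsPeak]
  by_cases hy : y + 1 < n
  · have hy' : y < n := by omega
    have h1 := pathVal_succ_s14 f ⟨y, hy'⟩
    have h2 := pathVal_succ_s14 f ⟨y + 1, hy⟩
    have h3 := stepExt_succ f ⟨y, hy'⟩
    have h4 := stepExt_succ f ⟨y + 1, hy⟩
    simp only at h1 h2 h3 h4
    simp only [IsPeak, h1, h2, h3, h4, hy, Nat.add_sub_cancel]
    cases f ⟨y, hy'⟩ <;> cases f ⟨y + 1, hy⟩ <;> simp
    omega
  · simp [IsPeak, hy, stepExt_of_lt f (by omega : n < y + 1 + 1)]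

lemma numPeaks_eq_sum :
    numPeaks f = ∑ x ∈ range (n + 1), (stepExt f x && !stepExt f (x + 1)).toNat := by
  rw [sum_range_succ, stepExt_of_lt f (by omega : n < n + 1), numPeaks, card_filter]
  simp only [Bool.not_true, Bool.and_false, Bool.toNat_false, add_zero]
  refine sum_congr rfl fun x _ => ?_
  simp only [isPeak_iff_stepExt]
  cases stepExt f x <;> cases stepExt f (x + 1) <;> rfl

lemma chainVal_Phi {i : ℕ} (hi : i ≤ n + 1) :
    chainVal (Phi f) i = ∑ x ∈ range i, (stepExt f (x + 1) != stepExt f x).toNat := by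
  refine sum_congr rfl fun x hx => ?_
  rw [dif_pos (by simp at hx; omega), Phi]
  cases stepExt f (x + 1) <;> cases stepExt f x <;> rfl

lemma chainVal_Phi_eq_two_mul_numPeaks_add_one :
    chainVal (Phi f) (n + 1) = 2 * numPeaks f + 1 := by
  rw [chainVal_Phi f le_rfl, sum_range_bne_toNat_eq _ (stepExt_zero f), numPeaks_eq_sum,
    stepExt_of_lt f (by omega), Bool.toNat_true]

lemma bodd_chainVal_Phi {i : ℕ} (hi : i ≤ n + 1) : (chainVal (Phi f) i).bodd = stepExt f i := by
  rw [chainVal_Phi f hi, sum_range_bne_toNat_eq _ (stepExt_zero f)]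
  cases stepExt f i <;> simp

end Path

lemma chainVal_succ {n : ℕ} (g : Fin (n + 1) → Bool) (i : Fin (n + 1)) :
    chainVal g (i + 1) = chainVal g i + (g i).toNat := by
  rw [chainVal, chainVal, sum_range_succ, dif_pos i.isLt]
  cases g i <;> rfl

def phiInv {n : ℕ} (g : Fin (n + 1) → Bool) (j : Fin n) : Bool :=
  (chainVal g (j + 1)).bodd

lemma phiInv_Phi {n : ℕ} (f : Fin n → Bool) : phiInv (Phi f) = f := by
  funext j
  rw [phiInv, bodd_chainVal_Phi f (by omega), stepExt_succ]

lemma stepExt_phiInv {n : ℕ} (g : Fin (n + 1) → Bool) (hg : (chainVal g (n + 1)).bodd = true)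
    {i : ℕ} (hi : i ≤ n + 1) : stepExt (phiInv g) i = (chainVal g i).bodd := by
  rcases Nat.lt_or_ge n i with hlt | hle
  · rw [stepExt_of_lt _ hlt, show i = n + 1 by omega, hg]
  rcases i with _ | j
  · simp [chainVal]
  · exact stepExt_succ (phiInv g) ⟨j, by omega⟩

lemma Phi_phiInv {n : ℕ} (g : Fin (n + 1) → Bool) (hg : (chainVal g (n + 1)).bodd = true) :
    Phi (phiInv g) = g := by
  funext i
  rw [Phi, stepExt_phiInv g hg (by omega), stepExt_phiInv g hg (by omega), chainVal_succ]
  cases g i <;> simp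

theorem phi_bijOn_general (n k : ℕ) :
    Set.BijOn (Phi (n := n))
      {f | numPeaks f = k}
      {g : Fin (n + 1) → Bool | chainVal g (n + 1) = 2 * k + 1} := by
  have hodd {g : Fin (n + 1) → Bool} (hg : chainVal g (n + 1) = 2 * k + 1) :
      (chainVal g (n + 1)).bodd = true := by
    simp [hg]
  refine Set.InvOn.bijOn ⟨fun f _ => phiInv_Phi f, fun g hg => Phi_phiInv g (hodd hg)⟩ ?_ ?_
  · intro f (hf : numPeaks f = k)
    rw [Set.mem_ofPred_eq, chainVal_Phi_eq_two_mul_numPeaks_add_one, hf]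
  · intro g (hg : chainVal g (n + 1) = 2 * k + 1)
    have h := chainVal_Phi_eq_two_mul_numPeaks_add_one (phiInv g)
    rw [Phi_phiInv g (hodd hg), hg] at h
    rw [Set.mem_ofPred_eq]
    omega

/-- `Φₙ`, restricted to Bernoulli paths with exactly `k` peaks, is a bijection
onto the set of simple chains of length `n+1` (encoded by their `0/1`
increments, starting at `0`) ending at height `2k+1`. -/
theorem phi_bijOn (n k : ℕ) (hk : k ≤ n / 2) :
    Set.BijOn (Phi (n := n))
      {f | numPeaks f = k}
      {g : Fin (n + 1) → Bool | chainVal g (n + 1) = 2 * k + 1} :=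
  phi_bijOn_general n k
end
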